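/- For every z = x + iy ∈ ℂ with x ≥ 0: |erfc(z)| ≥ e^{y² − x²}/√((1 + √π·x)² + π·y²) ≥ e^{y² − x²}/(1 + √π·|z|), and |erfc(z)| ≤ e^{y² − x²}. -/

import Mathlib

noncomputable section

/-- Complementary error function `erfc(z) = (2/√π) ∫_{t ≥ 0} e^{-(z+t)²} dt`. -/
def erfc (z : ℂ) : ℂ :=
  (2 / Real.sqrt Real.pi : ℂ) * ∫ t in Set.Ici (0 : ℝ), Complex.exp (-(z + (t : ℂ)) ^ 2)

/-!
Write `erfcx z = e^{z²} erfc z`. For `x, t ≥ 0` the integrand satisfies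
`|e^{-(z+t)²}| = e^{y² - (x+t)²} ≤ e^{y² - x²} e^{-t²}`, which gives the upper bound, i.e.
`|erfcx z| ≤ 1` on the closed right half-plane.

For the lower bound, `G z = (1 + √π z) erfcx z` has `Re G ≥ 1` on the right half-plane, by
Phragmén–Lindelöf applied to `exp (-G)`. Differentiating under the integral sign gives
`erfc' z = -(2/√π) e^{-z²}`, hence `erfc (iy) = 1 - (2i/√π) y ∫₀¹ e^{y²u²} du` and
`Re G (iy) = e^{-y²} (1 + 2y² ∫₀¹ e^{y²u²} du) ≥ 1`; on the positive real axis `G` is real and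
nonnegative; and `|G z| ≤ 1 + √π |z|` controls the growth. Finally
`1 ≤ |G z| = |1 + √π z| e^{x² - y²} |erfc z|`, while
`|1 + √π z| = √((1 + √π x)² + π y²) ≤ 1 + √π |z|`.
-/

open MeasureTheory Filter Set Complex Real

lemma integrable_exp_quadratic {b : ℝ} (hb : b < 0) (c d : ℝ) :
    Integrable fun t : ℝ => rexp (b * t ^ 2 + c * t + d) := by
  simpa [Complex.norm_exp, ← ofReal_pow] using
    (integrable_cexp_quadratic' (b := b) (by simpa using hb) c d).norm

lemma integrable_cexp_neg_add_sq (z : ℂ) : Integrable fun t : ℝ => cexp (-(z + t) ^ 2) := by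
  convert integrable_cexp_quadratic (b := 1) (by simp) (-2 * z) (-z ^ 2) using 3
  ring

lemma norm_cexp_neg_add_sq (z : ℂ) (t : ℝ) :
    ‖cexp (-(z + t) ^ 2)‖ = rexp (z.im ^ 2 - (z.re + t) ^ 2) := by
  rw [Complex.norm_exp]
  congr 1
  simp [sq]

lemma hasDerivAt_cexp_neg_sq (u : ℂ) :
    HasDerivAt (fun u => cexp (-u ^ 2)) (-2 * u * cexp (-u ^ 2)) u := by
  have h : HasDerivAt (fun u : ℂ => -u ^ 2) (-(2 * u)) u := by
    simpa using ((hasDerivAt_id' u).fun_pow 2).fun_neg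
  exact h.cexp.congr_deriv (by ring)

lemma tendsto_cexp_neg_add_sq_atTop (z : ℂ) :
    Tendsto (fun t : ℝ => cexp (-(z + t) ^ 2)) atTop (nhds 0) := by
  rw [tendsto_zero_iff_norm_tendsto_zero]
  simp only [norm_cexp_neg_add_sq]
  refine Real.tendsto_exp_atBot.comp (tendsto_atBot_add_const_left _ _ ?_)
  exact tendsto_neg_atTop_atBot.comp
    ((tendsto_pow_atTop two_ne_zero).comp (tendsto_atTop_add_const_left _ _ tendsto_id))

lemma norm_deriv_cexp_neg_add_sq_le {w : ℂ} {R t : ℝ} (hw : ‖w‖ ≤ R) (ht : 0 ≤ t) :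
    ‖-2 * (w + t) * cexp (-(w + t) ^ 2)‖ ≤
      2 * rexp (-1 * t ^ 2 + (2 * R + 1) * t + (R ^ 2 + R)) := by
  have hre : -R ≤ w.re := by linarith [neg_abs_le w.re, abs_re_le_norm w]
  have him : w.im ^ 2 ≤ R ^ 2 := sq_le_sq' (by linarith [neg_abs_le w.im, abs_im_le_norm w])
    (by linarith [le_abs_self w.im, abs_im_le_norm w])
  have hlin : ‖w + t‖ ≤ R + t := by
    simpa [abs_of_nonneg ht] using (norm_add_le w (t : ℂ)).trans (by simp [hw, abs_of_nonneg ht])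
  rw [norm_mul, norm_mul, norm_cexp_neg_add_sq]
  -- `R + t ≤ e^{R + t}` absorbs the linear factor into a Gaussian-type exponent.
  calc ‖(-2 : ℂ)‖ * ‖w + t‖ * rexp (w.im ^ 2 - (w.re + t) ^ 2)
      ≤ 2 * rexp (R + t) * rexp (w.im ^ 2 - (w.re + t) ^ 2) := by
        gcongr
        · simp
        · linarith [Real.add_one_le_exp (R + t)]
    _ ≤ 2 * rexp (-1 * t ^ 2 + (2 * R + 1) * t + (R ^ 2 + R)) := by
        rw [mul_assoc, ← Real.exp_add]
        gcongr 2 * rexp ?_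
        nlinarith [mul_le_mul_of_nonneg_right hre ht, sq_nonneg w.re]

lemma hasDerivAt_integral_cexp_neg_add_sq (z : ℂ) :
    HasDerivAt (fun w : ℂ => ∫ t in Ici (0 : ℝ), cexp (-(w + t) ^ 2)) (-cexp (-z ^ 2)) z := by
  set R := ‖z‖ + 1
  have hball : ∀ w ∈ Metric.ball z 1, ‖w‖ ≤ R := fun w hw => by
    have := norm_le_norm_add_norm_sub' w z
    rw [Metric.mem_ball, dist_eq_norm] at hw
    linarith
  obtain ⟨hF'_int, hderiv⟩ := hasDerivAt_integral_of_dominated_loc_of_deriv_le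
    (μ := volume.restrict (Ici 0)) (F := fun w (t : ℝ) => cexp (-(w + t) ^ 2))
    (F' := fun w (t : ℝ) => -2 * (w + t) * cexp (-(w + t) ^ 2))
    (Metric.ball_mem_nhds z one_pos)
    (Eventually.of_forall fun w => (by fun_prop : Continuous _).aestronglyMeasurable)
    (integrable_cexp_neg_add_sq z).integrableOn
    (by fun_prop : Continuous _).aestronglyMeasurable
    (by
      filter_upwards [ae_restrict_mem measurableSet_Ici] with t ht w hw
      exact norm_deriv_cexp_neg_add_sq_le (hball w hw) ht)
    ((integrable_exp_quadratic (by norm_num) _ _).const_mul 2).integrableOn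
    (Eventually.of_forall fun t w _ => (hasDerivAt_cexp_neg_sq (w + t)).comp_add_const w t)
  -- The `w`-derivative of the integrand is also its `t`-derivative.
  refine hderiv.congr_deriv ?_
  rw [integral_Ici_eq_integral_Ioi, integral_Ioi_of_hasDerivAt_of_tendsto'
    (fun t _ => ((hasDerivAt_cexp_neg_sq (z + t)).comp_const_add z t).comp_ofReal)
    (IntegrableOn.mono_set hF'_int Ioi_subset_Ici_self) (tendsto_cexp_neg_add_sq_atTop z)]
  simp

lemma hasDerivAt_erfc (z : ℂ) : HasDerivAt erfc (-(2 / √π) * cexp (-z ^ 2)) z :=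
  ((hasDerivAt_integral_cexp_neg_add_sq z).const_mul (2 / √π : ℂ)).congr_deriv (by ring)

lemma differentiable_erfc : Differentiable ℂ erfc := fun z => (hasDerivAt_erfc z).differentiableAt

lemma erfc_ofReal (x : ℝ) :
    erfc x = ((2 / √π * ∫ t in Ici (0 : ℝ), rexp (-(x + t) ^ 2) : ℝ) : ℂ) := by
  rw [erfc, ofReal_mul, ← integral_complex_ofReal]
  push_cast
  rfl

lemma erfc_zero : erfc 0 = 1 := by
  have hgauss : ∫ t in Ici (0 : ℝ), rexp (-(0 + t) ^ 2) = √π / 2 := by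
    simpa [integral_Ici_eq_integral_Ioi] using integral_gaussian_Ioi 1
  have hpi : √π ≠ 0 := (Real.sqrt_pos.2 Real.pi_pos).ne'
  rw [← ofReal_zero, erfc_ofReal, hgauss]
  field_simp
  simp

lemma erfc_eq_one_sub_integral (z : ℂ) :
    erfc z = 1 - 2 / √π * z * ∫ u in (0 : ℝ)..1, cexp (-(z * u) ^ 2) := by
  have hderiv : ∀ u : ℝ, HasDerivAt (fun u : ℝ => erfc (z * u))
      (-(2 / √π) * cexp (-(z * u) ^ 2) * z) u := fun u => by
    simpa using
      ((hasDerivAt_erfc (z * u)).comp (u : ℂ) ((hasDerivAt_id _).const_mul z)).comp_ofReal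
  have hftc := intervalIntegral.integral_eq_sub_of_hasDerivAt (fun u _ => hderiv u)
    ((by fun_prop : Continuous fun u : ℝ => -(2 / √π) * cexp (-(z * u) ^ 2) * z).intervalIntegrable
      0 1)
  simp only [intervalIntegral.integral_mul_const, intervalIntegral.integral_const_mul, ofReal_one,
    mul_one, ofReal_zero, mul_zero, erfc_zero] at hftc
  linear_combination -hftc

lemma exp_sq_le_one_add_integral (y : ℝ) :
    rexp (y ^ 2) ≤ 1 + 2 * y ^ 2 * ∫ u in (0 : ℝ)..1, rexp ((y * u) ^ 2) := by
  have hftc : ∫ u in (0 : ℝ)..1, 2 * y ^ 2 * u * rexp ((y * u) ^ 2) = rexp (y ^ 2) - 1 := by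
    rw [intervalIntegral.integral_eq_sub_of_hasDerivAt (f := fun u => rexp ((y * u) ^ 2))
      (fun u _ => ?_) ((by fun_prop : Continuous fun u : ℝ =>
        2 * y ^ 2 * u * rexp ((y * u) ^ 2)).intervalIntegrable 0 1)]
    · simp
    · exact (((hasDerivAt_id' u).const_mul y).fun_pow 2).exp.congr_deriv (by ring)
  have hmono : ∫ u in (0 : ℝ)..1, 2 * y ^ 2 * u * rexp ((y * u) ^ 2)
      ≤ ∫ u in (0 : ℝ)..1, 2 * y ^ 2 * rexp ((y * u) ^ 2) :=
    intervalIntegral.integral_mono_on zero_le_one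
      ((by fun_prop : Continuous _).intervalIntegrable 0 1)
      ((by fun_prop : Continuous _).intervalIntegrable 0 1) fun u hu =>
        mul_le_mul_of_nonneg_right (mul_le_of_le_one_right (by positivity) hu.2) (by positivity)
  rw [hftc, intervalIntegral.integral_const_mul] at hmono
  linarith

lemma norm_erfc_le {z : ℂ} (hz : 0 ≤ z.re) : ‖erfc z‖ ≤ rexp (z.im ^ 2 - z.re ^ 2) := by
  have hgauss : ∫ t in Ici (0 : ℝ), rexp (-1 * t ^ 2) = √π / 2 := by
    simpa [integral_Ici_eq_integral_Ioi] using integral_gaussian_Ioi 1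
  have hbound : ‖∫ t in Ici (0 : ℝ), cexp (-(z + t) ^ 2)‖
      ≤ ∫ t in Ici (0 : ℝ), rexp (z.im ^ 2 - z.re ^ 2) * rexp (-1 * t ^ 2) := by
    refine norm_integral_le_of_norm_le
      ((integrable_exp_neg_mul_sq one_pos).const_mul _).integrableOn ?_
    filter_upwards [ae_restrict_mem measurableSet_Ici] with t ht
    rw [norm_cexp_neg_add_sq, ← Real.exp_add]
    exact Real.exp_le_exp.2 (by nlinarith [mul_nonneg hz ht])
  rw [integral_const_mul, hgauss] at hbound
  have hpi : 0 < √π := Real.sqrt_pos.2 Real.pi_pos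
  calc ‖erfc z‖ ≤ 2 / √π * (rexp (z.im ^ 2 - z.re ^ 2) * (√π / 2)) := by
        rw [erfc, norm_mul]
        gcongr
        simp [abs_of_pos hpi]
    _ = rexp (z.im ^ 2 - z.re ^ 2) := by field_simp

def erfcx (z : ℂ) : ℂ := cexp (z ^ 2) * erfc z

lemma norm_erfcx (z : ℂ) : ‖erfcx z‖ = rexp (z.re ^ 2 - z.im ^ 2) * ‖erfc z‖ := by
  rw [erfcx, norm_mul, Complex.norm_exp]
  simp [sq]

lemma norm_erfcx_le_one {z : ℂ} (hz : 0 ≤ z.re) : ‖erfcx z‖ ≤ 1 := by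
  rw [norm_erfcx, ← le_div_iff₀' (Real.exp_pos _), one_div, ← Real.exp_neg, neg_sub]
  exact norm_erfc_le hz

lemma differentiable_erfcx : Differentiable ℂ erfcx :=
  (differentiable_id.pow 2).cexp.mul differentiable_erfc

lemma norm_one_add_sqrt_pi_mul_le (z : ℂ) : ‖1 + √π * z‖ ≤ 1 + √π * ‖z‖ :=
  (norm_add_le _ _).trans (by simp [abs_of_nonneg (Real.sqrt_nonneg π)])

lemma norm_one_add_sqrt_pi_mul (z : ℂ) :
    ‖1 + √π * z‖ = √((1 + √π * z.re) ^ 2 + π * z.im ^ 2) := by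
  rw [norm_eq_sqrt_sq_add_sq]
  simp [mul_pow, Real.sq_sqrt Real.pi_pos.le]

lemma re_mul_erfcx_ofReal_nonneg {x : ℝ} (hx : 0 ≤ x) : 0 ≤ ((1 + √π * x) * erfcx x).re := by
  rw [erfcx, erfc_ofReal, ← ofReal_pow, ← ofReal_exp]
  norm_cast
  have : 0 ≤ ∫ t in Ici (0 : ℝ), rexp (-(x + t) ^ 2) := integral_nonneg fun t => (Real.exp_pos _).le
  positivity

lemma one_le_re_mul_erfcx_mul_I (y : ℝ) : 1 ≤ ((1 + √π * (y * I)) * erfcx (y * I)).re := by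
  set J := ∫ u in (0 : ℝ)..1, rexp ((y * u) ^ 2)
  have herfc : erfc (y * I) = 1 - 2 / √π * (y * I) * J := by
    have : ∀ u : ℝ, cexp (-(y * I * u) ^ 2) = ((rexp ((y * u) ^ 2) : ℝ) : ℂ) := fun u => by
      push_cast
      ring_nf
      simp
    simp only [erfc_eq_one_sub_integral, this, intervalIntegral.integral_ofReal, J]
  have hsq : ((y : ℂ) * I) ^ 2 = ((-y ^ 2 : ℝ) : ℂ) := by
    push_cast
    ring_nf
    simp
  have hprod : (1 + √π * (y * I)) * erfcx (y * I)
      = ((rexp (-y ^ 2) * (1 + 2 * y ^ 2 * J) : ℝ) : ℂ)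
        + ((rexp (-y ^ 2) * (√π * y - 2 / √π * y * J) : ℝ) : ℂ) * I := by
    rw [erfcx, herfc, hsq]
    push_cast
    have hs : (√π : ℂ) ≠ 0 := ofReal_ne_zero.2 (Real.sqrt_pos.2 Real.pi_pos).ne'
    linear_combination (-2 * cexp (-(y : ℂ) ^ 2) * y ^ 2 * J) * I_sq
      + (-2 * y ^ 2 * I ^ 2 * cexp (-(y : ℂ) ^ 2) * J) * mul_inv_cancel₀ hs
  have hre : ((1 + √π * (y * I)) * erfcx (y * I)).re = rexp (-y ^ 2) * (1 + 2 * y ^ 2 * J) := by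
    rw [hprod]
    simp only [add_re, mul_re, ofReal_re, ofReal_im, I_re, I_im]
    ring
  calc (1 : ℝ) = rexp (-y ^ 2) * rexp (y ^ 2) := by rw [← Real.exp_add]; simp
    _ ≤ ((1 + √π * (y * I)) * erfcx (y * I)).re := by
      rw [hre]
      gcongr
      exact exp_sq_le_one_add_integral y

lemma one_le_re_mul_erfcx {z : ℂ} (hz : 0 ≤ z.re) : 1 ≤ ((1 + √π * z) * erfcx z).re := by
  set G : ℂ → ℂ := fun w => (1 + √π * w) * erfcx w
  have hnorm : ∀ w, ‖cexp (-G w)‖ = rexp (-(G w).re) := fun w => by simp [Complex.norm_exp]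
  have hG : ∀ w : ℂ, 0 ≤ w.re → ‖G w‖ ≤ 1 + √π * ‖w‖ := fun w hw => by
    simpa [G, norm_mul] using mul_le_mul (norm_one_add_sqrt_pi_mul_le w) (norm_erfcx_le_one hw)
      (norm_nonneg _) (by positivity)
  have hgrowth : ∃ c < (2 : ℝ), ∃ B,
      (fun w => cexp (-G w)) =O[Bornology.cobounded ℂ ⊓ 𝓟 {w | 0 < w.re}]
        fun w => rexp (B * ‖w‖ ^ c) := by
    refine ⟨1, one_lt_two, √π, Asymptotics.IsBigO.of_bound (rexp 1) ?_⟩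
    refine eventually_inf_principal.2 (Eventually.of_forall fun w (hw : 0 < w.re) => ?_)
    rw [hnorm, Real.rpow_one, Real.norm_of_nonneg (Real.exp_pos _).le, ← Real.exp_add]
    exact Real.exp_le_exp.2 (by linarith [neg_le_abs (G w).re, abs_re_le_norm (G w), hG w hw.le])
  have hreal : IsBoundedUnder (· ≤ ·) atTop fun x : ℝ => ‖cexp (-G x)‖ := by
    refine isBoundedUnder_of_eventually_le (a := 1) ?_
    filter_upwards [eventually_ge_atTop 0] with x hx
    rw [hnorm, Real.exp_le_one_iff, neg_nonpos]
    exact re_mul_erfcx_ofReal_nonneg hx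
  have him : ∀ y : ℝ, ‖cexp (-G (y * I))‖ ≤ rexp (-1) := fun y => by
    rw [hnorm]
    exact Real.exp_le_exp.2 (neg_le_neg (one_le_re_mul_erfcx_mul_I y))
  have hdiff : Differentiable ℂ fun w => cexp (-G w) :=
    (((differentiable_const 1).add ((differentiable_const _).mul differentiable_id)).mul
      differentiable_erfcx).neg.cexp
  have hPL := PhragmenLindelof.right_half_plane_of_bounded_on_real hdiff.diffContOnCl hgrowth
    hreal him hz
  rw [hnorm] at hPL
  exact neg_le_neg_iff.1 (Real.exp_le_exp.1 hPL)

theorem stmt_17 (z : ℂ) (hx : 0 ≤ z.re) :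
    (Real.exp (z.im ^ 2 - z.re ^ 2) /
        Real.sqrt ((1 + Real.sqrt Real.pi * z.re) ^ 2 + Real.pi * z.im ^ 2) ≤
      ‖erfc z‖) ∧
    (Real.exp (z.im ^ 2 - z.re ^ 2) / (1 + Real.sqrt Real.pi * ‖z‖) ≤
      Real.exp (z.im ^ 2 - z.re ^ 2) /
        Real.sqrt ((1 + Real.sqrt Real.pi * z.re) ^ 2 + Real.pi * z.im ^ 2)) ∧
    ‖erfc z‖ ≤ Real.exp (z.im ^ 2 - z.re ^ 2) := by
  rw [← norm_one_add_sqrt_pi_mul]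
  have hpos : 0 < ‖1 + √π * z‖ := by
    refine (by positivity : (0 : ℝ) < 1 + √π * z.re).trans_le ?_
    simpa using re_le_norm (1 + √π * z)
  refine ⟨?_, div_le_div_of_nonneg_left (Real.exp_pos _).le hpos (norm_one_add_sqrt_pi_mul_le z),
    norm_erfc_le hx⟩
  have hlower := (one_le_re_mul_erfcx hx).trans (re_le_norm _)
  rw [norm_mul, norm_erfcx] at hlower
  rw [div_le_iff₀ hpos]
  calc rexp (z.im ^ 2 - z.re ^ 2)
      ≤ rexp (z.im ^ 2 - z.re ^ 2) * (‖1 + √π * z‖ * (rexp (z.re ^ 2 - z.im ^ 2) * ‖erfc z‖)) :=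
        le_mul_of_one_le_right (Real.exp_pos _).le hlower
    _ = ‖erfc z‖ * ‖1 + √π * z‖ := by
        rw [← neg_sub, Real.exp_neg]
        field_simp

end
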